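/- Let n ≥ 1, let W be an n×n real doubly stochastic matrix such that every entry of W^n is strictly positive, and let x : ℕ → ℝ^n evolve according to x(k+1) = W(x(k) + θ(k)) with ‖θ(k)‖_∞ ≤ α ρ^k for all k, where α > 0 and ρ ∈ [0,1). Then lim_{k→∞} (max_i x_i(k) − min_i x_i(k)) = 0; that is, all node states asymptotically agree even though the total noise need not be zero. -/

import Mathlib

/-!
A row-stochastic matrix never increases the spread `max v - min v`, and one whose entries are
all at least `e` shrinks it by the factor `1 - 2e`. Along the noisy iteration the spread
therefore grows by at most `2‖θ k‖` per step, and over a block of `n` steps it contracts by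
`1 - 2e < 1` (with `e > 0` the smallest entry of `W ^ n`) up to the noise of that block. As the
noise is summable, the spread plus the remaining noise is nonincreasing, hence convergent to some
`L`; passing to the limit in the block inequality gives `L ≤ (1 - 2e) L`, so `L = 0`.
-/

open Filter Finset Matrix

theorem tendsto_zero_of_le_add_of_le_mul_add {S b : ℕ → ℝ} {q : ℝ} {n : ℕ}
    (hS : ∀ k, 0 ≤ S k) (hb : Summable b) (hstep : ∀ k, S (k + 1) ≤ S k + b k)
    (hq : q < 1) (hcontr : ∀ k, S (k + n) ≤ q * S k + ∑ j ∈ range n, b (k + j)) :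
    Tendsto S atTop (nhds 0) := by
  set tail : ℕ → ℝ := fun k => ∑' j, b (j + k)
  have htail : Tendsto tail atTop (nhds 0) := tendsto_sum_nat_add b
  set U : ℕ → ℝ := fun k => S k + tail k
  have hU_anti : Antitone U := antitone_nat_of_succ_le fun k => by
    have : tail k = b k + tail (k + 1) := by
      simpa [tail, add_assoc, add_comm 1 k] using
        ((summable_nat_add_iff k).2 hb).tsum_eq_zero_add
    simp only [U, this]
    linarith [hstep k]
  have hU_bdd : BddBelow (Set.range U) := by
    obtain ⟨B, hB⟩ := htail.bddBelow_range
    exact ⟨B, by rintro _ ⟨k, rfl⟩; linarith [hS k, hB ⟨k, rfl⟩]⟩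
  set L := ⨅ k, U k
  have hSL : Tendsto S atTop (nhds L) := by
    simpa [U] using (tendsto_atTop_ciInf hU_anti hU_bdd).sub htail
  have hnoise : Tendsto (fun k => ∑ j ∈ range n, b (k + j)) atTop (nhds 0) := by
    simpa using tendsto_finsetSum (range n) fun j _ =>
      hb.tendsto_atTop_zero.comp (tendsto_add_atTop_nat j)
  have hL : L ≤ q * L :=
    le_of_tendsto_of_tendsto' (hSL.comp (tendsto_add_atTop_nat n))
      (by simpa using (hSL.const_mul q).add hnoise) hcontr
  have hL0 : 0 ≤ L := ge_of_tendsto' hSL hS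
  have hL_eq : L = 0 := by nlinarith
  rwa [hL_eq] at hSL

section RowStochastic

variable {ι : Type*} [Fintype ι] [DecidableEq ι] {A : Matrix ι ι ℝ}

-- `A *ᵥ v = M - A *ᵥ (M - v)`, and the entry `A i j₀` alone removes `e * (M - v j₀)`.
theorem mulVec_apply_le_sub_mul (hA : A ∈ rowStochastic ℝ ι) {v : ι → ℝ} {M e : ℝ}
    (hv : ∀ j, v j ≤ M) {i j₀ : ι} (he : e ≤ A i j₀) :
    (A *ᵥ v) i ≤ M - e * (M - v j₀) := by
  have hdecomp : (A *ᵥ v) i = M - ∑ j, A i j * (M - v j) := by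
    simp only [mulVec, dotProduct, mul_sub, sum_sub_distrib, ← sum_mul,
      sum_row_of_mem_rowStochastic hA, one_mul, sub_sub_cancel]
  have hterm : A i j₀ * (M - v j₀) ≤ ∑ j, A i j * (M - v j) :=
    single_le_sum (fun j _ => mul_nonneg (nonneg_of_mem_rowStochastic hA (i := i) (j := j))
      (sub_nonneg.2 (hv j))) (mem_univ j₀)
  rw [hdecomp]
  nlinarith [sub_nonneg.2 (hv j₀)]

theorem add_mul_le_mulVec_apply (hA : A ∈ rowStochastic ℝ ι) {v : ι → ℝ} {m e : ℝ}
    (hv : ∀ j, m ≤ v j) {i j₀ : ι} (he : e ≤ A i j₀) :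
    m + e * (v j₀ - m) ≤ (A *ᵥ v) i := by
  have := mulVec_apply_le_sub_mul hA (v := -v) (M := -m) (fun j => neg_le_neg (hv j)) he
  rw [mulVec_neg, Pi.neg_apply, Pi.neg_apply] at this
  linarith

theorem norm_mulVec_le_of_mem_rowStochastic (hA : A ∈ rowStochastic ℝ ι) (v : ι → ℝ) :
    ‖A *ᵥ v‖ ≤ ‖v‖ := by
  have hv : ∀ j, |v j| ≤ ‖v‖ := fun j => by simpa using norm_le_pi_norm v j
  refine (pi_norm_le_iff_of_nonneg (norm_nonneg v)).2 fun i => abs_le.2 ⟨?_, ?_⟩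
  · simpa using add_mul_le_mulVec_apply hA (fun j => (abs_le.1 (hv j)).1)
      (nonneg_of_mem_rowStochastic hA (i := i) (j := i))
  · simpa using mulVec_apply_le_sub_mul hA (fun j => (abs_le.1 (hv j)).2)
      (nonneg_of_mem_rowStochastic hA (i := i) (j := i))

end RowStochastic

noncomputable def spread {ι : Type*} (v : ι → ℝ) : ℝ := (⨆ i, v i) - ⨅ i, v i

section Spread

variable {ι : Type*} [Fintype ι] [Nonempty ι]

theorem spread_nonneg (v : ι → ℝ) : 0 ≤ spread v := by
  obtain ⟨i⟩ := ‹Nonempty ι›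
  exact sub_nonneg.2 <|
    (ciInf_le (Finite.bddBelow_range v) i).trans (le_ciSup (Finite.bddAbove_range v) i)

theorem spread_add_le (v w : ι → ℝ) : spread (v + w) ≤ spread v + 2 * ‖w‖ := by
  have hw : ∀ i, |w i| ≤ ‖w‖ := fun i => by simpa using norm_le_pi_norm w i
  have hsup : ⨆ i, (v + w) i ≤ (⨆ i, v i) + ‖w‖ := ciSup_le fun i =>
    add_le_add (le_ciSup (Finite.bddAbove_range v) i) (abs_le.1 (hw i)).2
  have hinf : (⨅ i, v i) - ‖w‖ ≤ ⨅ i, (v + w) i := le_ciInf fun i => by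
    linarith [ciInf_le (Finite.bddBelow_range v) i, (abs_le.1 (hw i)).1, Pi.add_apply v w i]
  unfold spread
  linarith

variable [DecidableEq ι] {A : Matrix ι ι ℝ}

theorem spread_mulVec_le (hA : A ∈ rowStochastic ℝ ι) {e : ℝ} (he : ∀ i j, e ≤ A i j)
    (v : ι → ℝ) : spread (A *ᵥ v) ≤ (1 - 2 * e) * spread v := by
  obtain ⟨jmin, hjmin⟩ := Finite.exists_min v
  obtain ⟨jmax, hjmax⟩ := Finite.exists_max v
  have hmin : ⨅ j, v j = v jmin :=
    le_antisymm (ciInf_le (Finite.bddBelow_range v) jmin) (le_ciInf hjmin)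
  have hmax : ⨆ j, v j = v jmax :=
    le_antisymm (ciSup_le hjmax) (le_ciSup (Finite.bddAbove_range v) jmax)
  have hsup : ⨆ i, (A *ᵥ v) i ≤ v jmax - e * (v jmax - v jmin) :=
    ciSup_le fun i => mulVec_apply_le_sub_mul hA hjmax (he i jmin)
  have hinf : v jmin + e * (v jmax - v jmin) ≤ ⨅ i, (A *ᵥ v) i :=
    le_ciInf fun i => add_mul_le_mulVec_apply hA hjmin (he i jmax)
  rw [spread, spread, hmin, hmax]
  linarith

theorem spread_mulVec_le_spread (hA : A ∈ rowStochastic ℝ ι) (v : ι → ℝ) :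
    spread (A *ᵥ v) ≤ spread v := by
  simpa using spread_mulVec_le hA (fun _ _ => nonneg_of_mem_rowStochastic hA) v

end Spread

section NoisyConsensus

variable {ι : Type*} [Fintype ι] [DecidableEq ι] {W : Matrix ι ι ℝ} {x θ : ℕ → ι → ℝ}
  (hW : W ∈ rowStochastic ℝ ι) (hdyn : ∀ k, x (k + 1) = W *ᵥ (x k + θ k))
include hW hdyn

theorem norm_sub_pow_mulVec_le (k m : ℕ) :
    ‖x (k + m) - (W ^ m) *ᵥ x k‖ ≤ ∑ j ∈ range m, ‖θ (k + j)‖ := by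
  induction m with
  | zero => simp
  | succ m ih =>
    have hstep : x (k + (m + 1)) - (W ^ (m + 1)) *ᵥ x k
        = W *ᵥ ((x (k + m) - (W ^ m) *ᵥ x k) + θ (k + m)) := by
      rw [← add_assoc, hdyn, pow_succ', ← mulVec_mulVec, ← mulVec_sub]
      abel_nf
    calc ‖x (k + (m + 1)) - (W ^ (m + 1)) *ᵥ x k‖
        ≤ ‖x (k + m) - (W ^ m) *ᵥ x k‖ + ‖θ (k + m)‖ :=
          hstep ▸ (norm_mulVec_le_of_mem_rowStochastic hW _).trans (norm_add_le _ _)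
      _ ≤ ∑ j ∈ range (m + 1), ‖θ (k + j)‖ := by
          rw [sum_range_succ]; gcongr

variable [Nonempty ι]

theorem spread_succ_le (k : ℕ) : spread (x (k + 1)) ≤ spread (x k) + 2 * ‖θ k‖ :=
  hdyn k ▸ (spread_mulVec_le_spread hW _).trans (spread_add_le _ _)

theorem spread_add_le_mul_spread_add {m : ℕ} {e : ℝ} (he : ∀ i j, e ≤ (W ^ m) i j) (k : ℕ) :
    spread (x (k + m)) ≤ (1 - 2 * e) * spread (x k) + ∑ j ∈ range m, 2 * ‖θ (k + j)‖ :=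
  calc spread (x (k + m))
      = spread ((W ^ m) *ᵥ x k + (x (k + m) - (W ^ m) *ᵥ x k)) := by rw [add_sub_cancel]
    _ ≤ spread ((W ^ m) *ᵥ x k) + 2 * ‖x (k + m) - (W ^ m) *ᵥ x k‖ := spread_add_le _ _
    _ ≤ (1 - 2 * e) * spread (x k) + ∑ j ∈ range m, 2 * ‖θ (k + j)‖ := by
      rw [← mul_sum]
      gcongr
      · exact spread_mulVec_le (pow_mem hW m) he _
      · exact norm_sub_pow_mulVec_le hW hdyn k m

end NoisyConsensus

theorem scda_spread_tendsto_zero_general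
    (n : ℕ) (hn : 1 ≤ n) (W : Matrix (Fin n) (Fin n) ℝ)
    (hW_nonneg : ∀ i j, 0 ≤ W i j)
    (hW_row : ∀ i, ∑ j, W i j = 1)
    (hWn_pos : ∀ i j, 0 < (W ^ n) i j)
    (x θ : ℕ → Fin n → ℝ)
    (hdyn : ∀ k, x (k + 1) = W.mulVec (x k + θ k))
    (α ρ : ℝ) (hρ0 : 0 ≤ ρ) (hρ1 : ρ < 1)
    (hθ : ∀ k, ‖θ k‖ ≤ α * ρ ^ k) :
    Tendsto (fun k => (⨆ i, x k i) - ⨅ i, x k i) atTop (nhds 0) := by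
  have : Nonempty (Fin n) := ⟨⟨0, hn⟩⟩
  have hW : W ∈ rowStochastic ℝ (Fin n) := mem_rowStochastic_iff_sum.2 ⟨hW_nonneg, hW_row⟩
  obtain ⟨p, hp⟩ := Finite.exists_min fun p : Fin n × Fin n => (W ^ n) p.1 p.2
  have hnoise : Summable fun k => 2 * ‖θ k‖ :=
    ((summable_geometric_of_lt_one hρ0 hρ1).mul_left (2 * α)).of_nonneg_of_le
      (fun k => by positivity) fun k => by linarith [hθ k]
  exact tendsto_zero_of_le_add_of_le_mul_add (fun k => spread_nonneg (x k)) hnoise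
    (spread_succ_le hW hdyn) (by linarith [hWn_pos p.1 p.2])
    (spread_add_le_mul_spread_add hW hdyn fun i j => hp (i, j))

/-- All node states asymptotically agree: under exponentially decaying noise,
the spread `max_i x_i(k) − min_i x_i(k)` of the noisy consensus iteration
converges to zero. -/
theorem scda_spread_tendsto_zero
    (n : ℕ) (hn : 1 ≤ n) (W : Matrix (Fin n) (Fin n) ℝ)
    (hW_nonneg : ∀ i j, 0 ≤ W i j)
    (hW_row : ∀ i, ∑ j, W i j = 1)
    (hW_col : ∀ j, ∑ i, W i j = 1)
    (hWn_pos : ∀ i j, 0 < (W ^ n) i j)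
    (x θ : ℕ → Fin n → ℝ)
    (hdyn : ∀ k, x (k + 1) = W.mulVec (x k + θ k))
    (α ρ : ℝ) (hα : 0 < α) (hρ0 : 0 ≤ ρ) (hρ1 : ρ < 1)
    (hθ : ∀ k, ‖θ k‖ ≤ α * ρ ^ k) :
    Tendsto (fun k => (⨆ i, x k i) - ⨅ i, x k i) atTop (nhds 0) :=
  scda_spread_tendsto_zero_general n hn W hW_nonneg hW_row hWn_pos x θ hdyn α ρ hρ0 hρ1 hθ
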